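/- arXiv:2405.13755 — 4 statements merged into one kernel-verified Lean document; each statement's English description precedes it below -/
import Mathlib

section
/- Suppose D_θ = √d/(1−γ) and choose the comparator points (λ*, π*, θ*_t) = (Φᵀμ^{π*}, π*, θ^{π_t}) for t = 1,…,T, where μ^{π*} is the occupancy measure induced by a policy π* and θ^{π_t} is the parameter vector of q^{π_t}, i.e. q^{π_t} = Φθ^{π_t}. Then the dynamic duality gap equals the expected suboptimality of the randomly chosen iterate: E_J[⟨μ^{π*} − μ^{π_J}, r⟩] = 𝔊_T(Φᵀμ^{π*}, π*, {θ^{π_t}}_{t=1}^T), where J ~ Uniform{1,…,T}. -/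
noncomputable section
open MeasureTheory Finset Matrix
open scoped BigOperators ENNReal

namespace Paper

variable {X A : Type*}

/-- Euclidean dot product on `Fin d → ℝ`. -/
def dotp {d : ℕ} (u v : Fin d → ℝ) : ℝ := ∑ i, u i * v i

/-- Euclidean norm on `Fin d → ℝ`. -/
def nrm2 {d : ℕ} (u : Fin d → ℝ) : ℝ := Real.sqrt (∑ i, (u i) ^ 2)

/-- Squared weighted norm `uᵀ M u`. -/
def wnormSq {d : ℕ} (M : Matrix (Fin d) (Fin d) ℝ) (u : Fin d → ℝ) : ℝ := dotp u (M.mulVec u)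

/-- Kullback–Leibler divergence between finitely supported distributions. -/
def KLdiv [Fintype A] (p q : A → ℝ) : ℝ := ∑ a, p a * Real.log (p a / q a)

/-- A stochastic policy. -/
def IsPolicy [Fintype A] (π : X → A → ℝ) : Prop :=
  (∀ x a, 0 ≤ π x a) ∧ (∀ x, ∑ a, π x a = 1)

/-- A probability distribution over a finite set. -/
def IsDist [Fintype X] (ν : X → ℝ) : Prop := (∀ x, 0 ≤ ν x) ∧ ∑ x, ν x = 1

/-- A transition kernel. -/
def IsKernel [Fintype X] (p : X → A → X → ℝ) : Prop :=
  (∀ x a x', 0 ≤ p x a x') ∧ (∀ x a, ∑ x', p x a x' = 1)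

/-- The softmax policy associated with parameter vector `θ`. -/
def softmax [Fintype A] {d : ℕ} (φ : X → A → Fin d → ℝ) (θ : Fin d → ℝ) (x : X) (a : A) : ℝ :=
  Real.exp (dotp (φ x a) θ) / ∑ a', Real.exp (dotp (φ x a') θ)

/-- State-action distribution at step `k` of the process started from `ν₀` and following `π`. -/
def trajDist [Fintype X] [Fintype A] (p : X → A → X → ℝ) (ν₀ : X → ℝ) (π : X → A → ℝ) :
    ℕ → X → A → ℝ
  | 0 => fun x a => ν₀ x * π x a
  | k + 1 => fun x a => (∑ x', ∑ a', trajDist p ν₀ π k x' a' * p x' a' x) * π x a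

/-- Normalized discounted state-action occupancy measure of policy `π`. -/
def occupancy [Fintype X] [Fintype A] (γ : ℝ) (p : X → A → X → ℝ) (ν₀ : X → ℝ)
    (π : X → A → ℝ) (x : X) (a : A) : ℝ :=
  (1 - γ) * ∑' k : ℕ, γ ^ k * trajDist p ν₀ π k x a

/-- `k`-step state transition kernel of the Markov chain induced by policy `π`. -/
def kernelPow [Fintype X] [Fintype A] [DecidableEq X] (p : X → A → X → ℝ) (π : X → A → ℝ) :
    ℕ → X → X → ℝ
  | 0 => fun x y => if x = y then 1 else 0
  | k + 1 => fun x y => ∑ z, kernelPow p π k x z * ∑ a, π z a * p z a y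

/-- The value function of policy `π`. -/
def vval [Fintype X] [Fintype A] [DecidableEq X] (γ : ℝ) (r : X → A → ℝ) (p : X → A → X → ℝ)
    (π : X → A → ℝ) (x : X) : ℝ :=
  ∑' k : ℕ, γ ^ k * ∑ y, kernelPow p π k x y * ∑ a, π y a * r y a

/-- The action-value function of policy `π`. -/
def qval [Fintype X] [Fintype A] [DecidableEq X] (γ : ℝ) (r : X → A → ℝ) (p : X → A → X → ℝ)
    (π : X → A → ℝ) (x : X) (a : A) : ℝ :=
  r x a + γ * ∑ x', p x a x' * vval γ r p π x'

/-- The normalized discounted return of policy `π`. -/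
def ret [Fintype X] [Fintype A] (γ : ℝ) (p : X → A → X → ℝ) (ν₀ : X → ℝ) (r : X → A → ℝ)
    (π : X → A → ℝ) : ℝ := ∑ x, ∑ a, occupancy γ p ν₀ π x a * r x a

/-- The parametrized value-function candidate `v_{θ,π}`. -/
def vparam [Fintype A] {d : ℕ} (φ : X → A → Fin d → ℝ) (θ : Fin d → ℝ) (π : X → A → ℝ)
    (x : X) : ℝ := ∑ a, π x a * dotp θ (φ x a)

/-- `Ψ v`, where `Ψ` is the matrix with columns `ψ x`. -/
def psiApply [Fintype X] {d : ℕ} (ψ : X → Fin d → ℝ) (v : X → ℝ) : Fin d → ℝ :=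
  ∑ x, v x • ψ x

/-- `Φᵀ μ`, the feature occupancy of a state-action measure `μ`. -/
def featOcc [Fintype X] [Fintype A] {d : ℕ} (φ : X → A → Fin d → ℝ) (μ : X → A → ℝ) :
    Fin d → ℝ := ∑ x, ∑ a, μ x a • φ x a

/-- The parametrized occupancy candidate `μ_{λ,π}` built from columns `ψh`. -/
def muOf [Fintype X] {d : ℕ} (γ : ℝ) (ν₀ : X → ℝ) (ψh : X → Fin d → ℝ) (lam : Fin d → ℝ)
    (π : X → A → ℝ) (x : X) (a : A) : ℝ :=
  π x a * ((1 - γ) * ν₀ x + γ * dotp (ψh x) lam)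

/-- The reduced Lagrangian `f(λ, π; θ)`. -/
def lag [Fintype X] [Fintype A] {d : ℕ} (γ : ℝ) (ν₀ : X → ℝ) (omg : Fin d → ℝ)
    (ψ : X → Fin d → ℝ) (φ : X → A → Fin d → ℝ) (lam θv : Fin d → ℝ) (π : X → A → ℝ) : ℝ :=
  (1 - γ) * ∑ x, ν₀ x * vparam φ θv π x
    + dotp lam (omg + γ • psiApply ψ (vparam φ θv π) - θv)

/-- The regularized empirical covariance matrix `Λ̂`. -/
def covMat {d n : ℕ} (β : ℝ) (φi : Fin n → Fin d → ℝ) : Matrix (Fin d) (Fin d) ℝ :=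
  β • (1 : Matrix (Fin d) (Fin d) ℝ) + (n : ℝ)⁻¹ • ∑ i, vecMulVec (φi i) (φi i)

/-- `Ψ̂ v`, where `Ψ̂` is the least-squares estimator of `Ψ`. -/
def psiHatApply {X : Type*} {d n : ℕ} (β : ℝ) (φi : Fin n → Fin d → ℝ)
    (xs : Fin n → X) (v : X → ℝ) : Fin d → ℝ :=
  (covMat β φi)⁻¹.mulVec ((n : ℝ)⁻¹ • ∑ i, v (xs i) • φi i)

/-- `ψ̂ x`, the column of the least-squares estimator `Ψ̂` at state `x`. -/
def psiHatCol {X : Type*} [DecidableEq X] {d n : ℕ} (β : ℝ) (φi : Fin n → Fin d → ℝ)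
    (xs : Fin n → X) (x : X) : Fin d → ℝ :=
  (covMat β φi)⁻¹.mulVec ((n : ℝ)⁻¹ • ∑ i, (if xs i = x then (1 : ℝ) else 0) • φi i)

/-! Write `P_π` for the state transition matrix of `π` and `r_π` for the policy-averaged reward.
Because `P_π` is row stochastic and `γ < 1`, the value `v^π = ∑ γᵏ P_πᵏ r_π` and the discounted
state visitation `d^π = ∑ γᵏ ν₀ P_πᵏ` converge and are the fixed points `v = r_π + γ P_π v` and
`d = ν₀ + γ d P_π`, while `μ^π = (1 - γ) d^π ⊗ π`. Linearity of `p` and `r` turns the Lagrangian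
into pairings of these vectors. At `λ = Φᵀμ^π` the flow equation for `d^π` cancels every term
involving `θ`, leaving `⟨μ^π, r⟩`; at `θ = θ^π` the constraint term vanishes and pairing the two
fixed-point equations gives `(1 - γ)⟨ν₀, v^π⟩ = ⟨μ^π, r⟩`. So the `t`-th summand of the gap is
`⟨μ^{π*} - μ^{π_t}, r⟩`. -/

lemma dotp_eq_dotProduct {d : ℕ} (u v : Fin d → ℝ) : dotp u v = u ⬝ᵥ v := rfl

lemma dotProduct_eq_of_eq_add_smul_vecMul {n : Type*} [Fintype n] {P : Matrix n n ℝ} {γ : ℝ}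
    {μ ν : n → ℝ} (h : μ = ν + γ • (μ ᵥ* P)) (w : n → ℝ) :
    μ ⬝ᵥ w = ν ⬝ᵥ w + γ * (μ ⬝ᵥ (P *ᵥ w)) := by
  conv_lhs => rw [h]
  rw [add_dotProduct, smul_dotProduct, ← dotProduct_mulVec, smul_eq_mul]

section Resolvent

variable {n : Type*} [Fintype n] [DecidableEq n] {P : Matrix n n ℝ} {γ : ℝ}

lemma abs_pow_apply_le_one (hP : P ∈ rowStochastic ℝ n) (k : ℕ) (i j : n) :
    |(P ^ k) i j| ≤ 1 := by
  have hPk := pow_mem hP k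
  rw [abs_of_nonneg (nonneg_of_mem_rowStochastic hPk)]
  exact le_one_of_mem_rowStochastic hPk

lemma summable_geometric_smul_pow_mulVec (hP : P ∈ rowStochastic ℝ n) (hγ : |γ| < 1)
    (v : n → ℝ) : Summable fun k : ℕ => γ ^ k • (P ^ k *ᵥ v) := by
  refine Pi.summable.mpr fun i => ?_
  refine Summable.of_norm_bounded ((summable_geometric_of_lt_one (abs_nonneg γ) hγ).mul_right
    (∑ j, |v j|)) fun k => ?_
  simp only [Pi.smul_apply, smul_eq_mul, Real.norm_eq_abs, abs_mul, abs_pow, mulVec, dotProduct]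
  gcongr
  refine (Finset.abs_sum_le_sum_abs _ _).trans (Finset.sum_le_sum fun j _ => ?_)
  rw [abs_mul]
  exact mul_le_of_le_one_left (abs_nonneg _) (abs_pow_apply_le_one hP k i j)

lemma summable_geometric_smul_vecMul_pow (hP : P ∈ rowStochastic ℝ n) (hγ : |γ| < 1)
    (v : n → ℝ) : Summable fun k : ℕ => γ ^ k • (v ᵥ* P ^ k) := by
  refine Pi.summable.mpr fun j => ?_
  refine Summable.of_norm_bounded ((summable_geometric_of_lt_one (abs_nonneg γ) hγ).mul_right
    (∑ i, |v i|)) fun k => ?_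
  simp only [Pi.smul_apply, smul_eq_mul, Real.norm_eq_abs, abs_mul, abs_pow, vecMul, dotProduct]
  gcongr
  refine (Finset.abs_sum_le_sum_abs _ _).trans (Finset.sum_le_sum fun i _ => ?_)
  rw [abs_mul]
  exact mul_le_of_le_one_right (abs_nonneg _) (abs_pow_apply_le_one hP k i j)

lemma tsum_geometric_smul_pow_mulVec_eq (hP : P ∈ rowStochastic ℝ n) (hγ : |γ| < 1)
    (v : n → ℝ) :
    ∑' k : ℕ, γ ^ k • (P ^ k *ᵥ v) = v + γ • (P *ᵥ ∑' k : ℕ, γ ^ k • (P ^ k *ᵥ v)) := by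
  have hs := summable_geometric_smul_pow_mulVec hP hγ v
  have hcomm := (LinearMap.toContinuousLinearMap (γ • mulVecLin P)).map_tsum hs
  simp only [LinearMap.coe_toContinuousLinearMap', LinearMap.smul_apply, mulVecLin_apply] at hcomm
  rw [hcomm, hs.tsum_eq_zero_add]
  simp only [pow_zero, one_smul, one_mulVec, pow_succ', mulVec_mulVec, mul_smul, mulVec_smul]

lemma tsum_geometric_smul_vecMul_pow_eq (hP : P ∈ rowStochastic ℝ n) (hγ : |γ| < 1)
    (v : n → ℝ) :
    ∑' k : ℕ, γ ^ k • (v ᵥ* P ^ k) = v + γ • ((∑' k : ℕ, γ ^ k • (v ᵥ* P ^ k)) ᵥ* P) := by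
  have hs := summable_geometric_smul_vecMul_pow hP hγ v
  have hcomm := (LinearMap.toContinuousLinearMap (γ • vecMulLinear P)).map_tsum hs
  simp only [LinearMap.coe_toContinuousLinearMap', LinearMap.smul_apply, vecMulLinear_apply] at hcomm
  rw [hcomm, hs.tsum_eq_zero_add]
  simp only [pow_zero, one_smul, vecMul_one, pow_succ, vecMul_vecMul, mul_smul, smul_vecMul,
    smul_comm (γ ^ _) γ]

end Resolvent

section MDP

variable {X A : Type*} [Fintype X] [Fintype A] {p : X → A → X → ℝ} {π : X → A → ℝ} {γ : ℝ}

def stateKernel (p : X → A → X → ℝ) (π : X → A → ℝ) : Matrix X X ℝ :=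
  Matrix.of fun x y => ∑ a, π x a * p x a y

def policyAvg (π : X → A → ℝ) (q : X → A → ℝ) (x : X) : ℝ := ∑ a, π x a * q x a

lemma stateKernel_mulVec (v : X → ℝ) :
    stateKernel p π *ᵥ v = policyAvg π fun x a => ∑ x', p x a x' * v x' := by
  ext x
  simp only [mulVec, dotProduct, stateKernel, of_apply, policyAvg, Finset.sum_mul, Finset.mul_sum]
  rw [Finset.sum_comm]
  exact Finset.sum_congr rfl fun _ _ => Finset.sum_congr rfl fun _ _ => mul_assoc _ _ _

variable [DecidableEq X]

lemma stateKernel_mem_rowStochastic (hp : IsKernel p) (hπ : IsPolicy π) :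
    stateKernel p π ∈ rowStochastic ℝ X := by
  refine mem_rowStochastic_iff_sum.mpr ⟨fun x y => Finset.sum_nonneg fun a _ =>
    mul_nonneg (hπ.1 x a) (hp.1 x a y), fun x => ?_⟩
  simp only [stateKernel, of_apply]
  rw [Finset.sum_comm]
  simp only [← Finset.mul_sum, hp.2, mul_one, hπ.2]

lemma kernelPow_eq_pow (k : ℕ) : kernelPow p π k = stateKernel p π ^ k := by
  induction k with
  | zero => ext x y; simp [kernelPow, one_apply]
  | succ k ih => ext x y; rw [pow_succ, mul_apply, ← ih]; rfl

lemma trajDist_eq (ν₀ : X → ℝ) (k : ℕ) (x : X) (a : A) :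
    trajDist p ν₀ π k x a = (ν₀ ᵥ* stateKernel p π ^ k) x * π x a := by
  induction k generalizing x a with
  | zero => simp [trajDist]
  | succ k ih =>
    simp only [trajDist, ih, pow_succ, ← vecMul_vecMul]
    congr 1
    simp only [vecMul, dotProduct, stateKernel, of_apply, Finset.mul_sum]
    exact Finset.sum_congr rfl fun _ _ => Finset.sum_congr rfl fun _ _ => by ring

def stateVisits (γ : ℝ) (p : X → A → X → ℝ) (ν₀ : X → ℝ) (π : X → A → ℝ) : X → ℝ :=
  ∑' k : ℕ, γ ^ k • (ν₀ ᵥ* stateKernel p π ^ k)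

variable (hγ : |γ| < 1) (hp : IsKernel p) (hπ : IsPolicy π)
include hγ hp hπ

lemma occupancy_eq (ν₀ : X → ℝ) (x : X) (a : A) :
    occupancy γ p ν₀ π x a = (1 - γ) * stateVisits γ p ν₀ π x * π x a := by
  have hs := summable_geometric_smul_vecMul_pow (stateKernel_mem_rowStochastic hp hπ) hγ ν₀
  simp only [occupancy, stateVisits, trajDist_eq, tsum_apply hs, Pi.smul_apply, smul_eq_mul,
    ← mul_assoc, tsum_mul_right]

lemma stateVisits_eq (ν₀ : X → ℝ) :
    stateVisits γ p ν₀ π = ν₀ + γ • (stateVisits γ p ν₀ π ᵥ* stateKernel p π) :=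
  tsum_geometric_smul_vecMul_pow_eq (stateKernel_mem_rowStochastic hp hπ) hγ ν₀

lemma vval_eq_tsum (r : X → A → ℝ) :
    vval γ r p π = ∑' k : ℕ, γ ^ k • (stateKernel p π ^ k *ᵥ policyAvg π r) := by
  ext x
  rw [tsum_apply (summable_geometric_smul_pow_mulVec (stateKernel_mem_rowStochastic hp hπ) hγ _)]
  simp only [vval, kernelPow_eq_pow]
  rfl

lemma vval_eq (r : X → A → ℝ) :
    vval γ r p π = policyAvg π r + γ • (stateKernel p π *ᵥ vval γ r p π) := by
  rw [vval_eq_tsum hγ hp hπ]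
  exact tsum_geometric_smul_pow_mulVec_eq (stateKernel_mem_rowStochastic hp hπ) hγ _

lemma sum_occupancy_mul (ν₀ : X → ℝ) (q : X → A → ℝ) :
    ∑ x, ∑ a, occupancy γ p ν₀ π x a * q x a
      = (1 - γ) * (stateVisits γ p ν₀ π ⬝ᵥ policyAvg π q) := by
  simp only [occupancy_eq hγ hp hπ, dotProduct, policyAvg, Finset.mul_sum]
  exact Finset.sum_congr rfl fun _ _ => Finset.sum_congr rfl fun _ _ => by ring

end MDP

section LinearMDP

variable {X A : Type*} [Fintype X] {d : ℕ} {φ : X → A → Fin d → ℝ}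
  {ψ : X → Fin d → ℝ} {omg : Fin d → ℝ} {p : X → A → X → ℝ} {r : X → A → ℝ}
  {π : X → A → ℝ} {γ : ℝ}

lemma dotp_psiApply (hplin : ∀ x a x', p x a x' = dotp (φ x a) (ψ x')) (x : X) (a : A)
    (v : X → ℝ) : dotp (φ x a) (psiApply ψ v) = ∑ x', p x a x' * v x' := by
  simp only [dotp_eq_dotProduct, psiApply, dotProduct_sum, dotProduct_smul, smul_eq_mul, hplin]
  exact Finset.sum_congr rfl fun _ _ => mul_comm _ _

variable [Fintype A]

lemma dotp_featOcc (μ : X → A → ℝ) (u : Fin d → ℝ) :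
    dotp (featOcc φ μ) u = ∑ x, ∑ a, μ x a * dotp (φ x a) u := by
  simp only [dotp_eq_dotProduct, featOcc, sum_dotProduct, smul_dotProduct, smul_eq_mul]

lemma vparam_add_smul_psiApply (hplin : ∀ x a x', p x a x' = dotp (φ x a) (ψ x'))
    (hrlin : ∀ x a, r x a = dotp (φ x a) omg) (v : X → ℝ) :
    vparam φ (omg + γ • psiApply ψ v) π = policyAvg π r + γ • (stateKernel p π *ᵥ v) := by
  ext x
  simp only [vparam, stateKernel_mulVec, Pi.add_apply, Pi.smul_apply, smul_eq_mul, policyAvg]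
  rw [Finset.mul_sum, ← Finset.sum_add_distrib]
  refine Finset.sum_congr rfl fun a _ => ?_
  rw [dotp_eq_dotProduct, dotProduct_comm, dotProduct_add, dotProduct_smul, ← dotp_eq_dotProduct,
    ← dotp_eq_dotProduct, dotp_psiApply hplin, ← hrlin, smul_eq_mul]
  ring

variable [DecidableEq X] (hγ : |γ| < 1) (hp : IsKernel p) (hπ : IsPolicy π)
  (hplin : ∀ x a x', p x a x' = dotp (φ x a) (ψ x')) (hrlin : ∀ x a, r x a = dotp (φ x a) omg)
include hγ hp hπ hplin hrlin

lemma lag_featOcc_occupancy (ν₀ : X → ℝ) (θ : Fin d → ℝ) :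
    lag γ ν₀ omg ψ φ (featOcc φ (occupancy γ p ν₀ π)) θ π
      = ∑ x, ∑ a, occupancy γ p ν₀ π x a * r x a := by
  set V := vparam φ θ π
  have hflow := dotProduct_eq_of_eq_add_smul_vecMul (stateVisits_eq hγ hp hπ ν₀) V
  have hθ : policyAvg π (fun x a => dotp (φ x a) θ) = V := by
    ext x
    simp only [policyAvg, V, vparam, dotp_eq_dotProduct, dotProduct_comm]
  have hψ := sum_occupancy_mul hγ hp hπ ν₀ fun x a => dotp (φ x a) (psiApply ψ V)
  have hθ' := sum_occupancy_mul hγ hp hπ ν₀ fun x a => dotp (φ x a) θ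
  simp only [dotp_psiApply hplin, ← stateKernel_mulVec] at hψ
  rw [hθ] at hθ'
  unfold lag
  rw [dotp_eq_dotProduct, dotProduct_sub, dotProduct_add, dotProduct_smul, smul_eq_mul,
    ← dotp_eq_dotProduct, ← dotp_eq_dotProduct, ← dotp_eq_dotProduct, dotp_featOcc, dotp_featOcc,
    dotp_featOcc]
  simp only [dotp_psiApply hplin, ← hrlin]
  rw [hψ, hθ']
  change (1 - γ) * (ν₀ ⬝ᵥ V) + _ = _
  rw [hflow]
  ring

lemma lag_omg_add_smul_psiApply_vval (ν₀ : X → ℝ) (lam : Fin d → ℝ) :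
    lag γ ν₀ omg ψ φ lam (omg + γ • psiApply ψ (vval γ r p π)) π
      = ∑ x, ∑ a, occupancy γ p ν₀ π x a * r x a := by
  have hV : vparam φ (omg + γ • psiApply ψ (vval γ r p π)) π = vval γ r p π := by
    rw [vparam_add_smul_psiApply hplin hrlin, ← vval_eq hγ hp hπ r]
  have hflow := dotProduct_eq_of_eq_add_smul_vecMul (stateVisits_eq hγ hp hπ ν₀) (vval γ r p π)
  have hr : policyAvg π r = vval γ r p π - γ • (stateKernel p π *ᵥ vval γ r p π) :=
    eq_sub_of_add_eq (vval_eq hγ hp hπ r).symm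
  rw [sum_occupancy_mul hγ hp hπ, lag, hV, sub_self, dotp_eq_dotProduct, dotProduct_zero, hr,
    dotProduct_sub, dotProduct_smul, hflow, smul_eq_mul]
  change (1 - γ) * (ν₀ ⬝ᵥ vval γ r p π) + 0 = _
  ring

end LinearMDP

theorem statement1_general {X A : Type*} [Fintype X] [Fintype A] [DecidableEq X] {d : ℕ} (T : ℕ)
    (γ : ℝ) (hγ : γ ∈ Set.Ioo (0 : ℝ) 1)
    (p : X → A → X → ℝ) (hp : IsKernel p)
    (r : X → A → ℝ)
    (ν₀ : X → ℝ)
    (φ : X → A → Fin d → ℝ) (ψ : X → Fin d → ℝ) (omg : Fin d → ℝ)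
    (hplin : ∀ x a x', p x a x' = dotp (φ x a) (ψ x'))
    (hrlin : ∀ x a, r x a = dotp (φ x a) omg)
    (π : ℕ → X → A → ℝ) (hπ : ∀ t, IsPolicy (π t))
    (πstar : X → A → ℝ) (hπstar : IsPolicy πstar)
    (lam θ : ℕ → Fin d → ℝ) :
    (T : ℝ)⁻¹ * ∑ t ∈ Finset.Icc 1 T, ∑ x, ∑ a,
        (occupancy γ p ν₀ πstar x a - occupancy γ p ν₀ (π t) x a) * r x a
      = (T : ℝ)⁻¹ * ∑ t ∈ Finset.Icc 1 T,
          (lag γ ν₀ omg ψ φ (featOcc φ (occupancy γ p ν₀ πstar)) (θ t) πstar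
            - lag γ ν₀ omg ψ φ (lam t)
                (omg + γ • psiApply ψ (vval γ r p (π t))) (π t)) := by
  have hγabs : |γ| < 1 := abs_lt.mpr ⟨by linarith [hγ.1], hγ.2⟩
  congr 1
  refine Finset.sum_congr rfl fun t _ => ?_
  rw [lag_featOcc_occupancy hγabs hp hπstar hplin hrlin, lag_omg_add_smul_psiApply_vval hγabs hp (hπ t) hplin hrlin,
    ← Finset.sum_sub_distrib]
  simp only [sub_mul, Finset.sum_sub_distrib]

/-- with the comparator points `(λ*, π*, θ*_t) = (Φᵀμ^{π*}, π*, θ^{π_t})`,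
`θ^{π_t} = ω + γΨv^{π_t}`, and `D_θ = √d/(1−γ)`, the dynamic duality gap equals the expected
suboptimality of the uniformly sampled output policy:
`E_J[⟨μ^{π*} − μ^{π_J}, r⟩] = 𝔊_T(Φᵀμ^{π*}, π*, {θ^{π_t}})`. -/
theorem statement1 {X A : Type*} [Fintype X] [Fintype A] [DecidableEq X] {d : ℕ} (T : ℕ)
    (γ : ℝ) (hγ : γ ∈ Set.Ioo (0 : ℝ) 1)
    (p : X → A → X → ℝ) (hp : IsKernel p)
    (r : X → A → ℝ) (hr01 : ∀ x a, r x a ∈ Set.Icc (0 : ℝ) 1)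
    (ν₀ : X → ℝ) (hν₀ : IsDist ν₀)
    (φ : X → A → Fin d → ℝ) (ψ : X → Fin d → ℝ) (omg : Fin d → ℝ)
    (hplin : ∀ x a x', p x a x' = dotp (φ x a) (ψ x'))
    (hrlin : ∀ x a, r x a = dotp (φ x a) omg)
    (Dθ : ℝ) (hDθ : Dθ = Real.sqrt d / (1 - γ))
    (π : ℕ → X → A → ℝ) (hπ : ∀ t, IsPolicy (π t))
    (πstar : X → A → ℝ) (hπstar : IsPolicy πstar)
    (lam θ : ℕ → Fin d → ℝ) :
    (T : ℝ)⁻¹ * ∑ t ∈ Finset.Icc 1 T, ∑ x, ∑ a,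
        (occupancy γ p ν₀ πstar x a - occupancy γ p ν₀ (π t) x a) * r x a
      = (T : ℝ)⁻¹ * ∑ t ∈ Finset.Icc 1 T,
          (lag γ ν₀ omg ψ φ (featOcc φ (occupancy γ p ν₀ πstar)) (θ t) πstar
            - lag γ ν₀ omg ψ φ (lam t)
                (omg + γ • psiApply ψ (vval γ r p (π t))) (π t)) :=
  statement1_general T γ hγ p hp r ν₀ φ ψ omg hplin hrlin π hπ πstar hπstar lam θ

end Paper
end
end

section
/- Let λ₁ = 0 and C = 6β(d + D_θ²) + 3d(1 + R D_θ)² + 3γ² d R² D_θ². Then the regret of the λ-player against any comparator λ* ∈ ℝ^d satisfies (1/T)∑_{t=1}^T ⟨λ* − λ_t, ω + γΨ̂v_{θ_t,π_t} − θ_t⟩ ≤ (1/(2ηT) + ϱ/2)‖λ*‖²_{Λ̂⁻¹} + ηC/2 − (ϱ/(2T))∑_{t=1}^T ‖λ_t‖²_{Λ̂⁻¹}. -/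
/-!
The update `λ_{t+1}` minimizes a quadratic whose Hessian is `(1/η + ϱ) Λ̂⁻¹`, so its value at any
comparator `λ*` exceeds its minimum by exactly `(1/(2η) + ϱ/2) ‖λ* - λ_{t+1}‖²_{Λ̂⁻¹}`. Together
with Young's inequality `⟨λ_{t+1} - λ_t, g⟩ ≤ ‖λ_{t+1} - λ_t‖²_{Λ̂⁻¹}/(2η) + (η/2) ‖g‖²_{Λ̂}` this
bounds the regret of round `t` by a difference `‖λ* - λ_t‖² - ‖λ* - λ_{t+1}‖²`, which telescopes,
plus `(η/2) ‖g_t‖²_{Λ̂}`. Finally `‖g_t‖²_{Λ̂} ≤ C`: the `Λ̂`-norms of `ω` and `θ_t` are controlled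
by the feature and reward bounds, and the least-squares estimate is a contraction,
`‖Ψ̂ v‖²_{Λ̂} ≤ maxᵢ v(X'ᵢ)²`.
-/

noncomputable section
open MeasureTheory Finset Matrix
open scoped BigOperators ENNReal

namespace Matrix

variable {ι : Type*} [Fintype ι] {M : Matrix ι ι ℝ}

lemma IsHermitian.dotProduct_mulVec_comm (hM : M.IsHermitian) (x y : ι → ℝ) :
    x ⬝ᵥ M *ᵥ y = y ⬝ᵥ M *ᵥ x := by
  rw [← dotProduct_transpose_mulVec, ← conjTranspose_eq_transpose_of_trivial, hM.eq]

lemma IsHermitian.add_dotProduct_mulVec_add (hM : M.IsHermitian) (x y : ι → ℝ) :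
    (x + y) ⬝ᵥ M *ᵥ (x + y) = x ⬝ᵥ M *ᵥ x + 2 * (x ⬝ᵥ M *ᵥ y) + y ⬝ᵥ M *ᵥ y := by
  rw [mulVec_add, add_dotProduct, dotProduct_add, dotProduct_add,
    hM.dotProduct_mulVec_comm y x]
  ring

lemma IsHermitian.sub_dotProduct_mulVec_sub (hM : M.IsHermitian) (x y : ι → ℝ) :
    (x - y) ⬝ᵥ M *ᵥ (x - y) = x ⬝ᵥ M *ᵥ x - 2 * (x ⬝ᵥ M *ᵥ y) + y ⬝ᵥ M *ᵥ y := by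
  rw [mulVec_sub, sub_dotProduct, dotProduct_sub, dotProduct_sub,
    hM.dotProduct_mulVec_comm y x]
  ring

lemma smul_dotProduct_mulVec_smul (c : ℝ) (x : ι → ℝ) :
    (c • x) ⬝ᵥ M *ᵥ (c • x) = c ^ 2 * (x ⬝ᵥ M *ᵥ x) := by
  rw [mulVec_smul, smul_dotProduct, dotProduct_smul, smul_eq_mul, smul_eq_mul]
  ring

lemma PosSemidef.dotProduct_mulVec_self_nonneg (hM : M.PosSemidef) (x : ι → ℝ) :
    0 ≤ x ⬝ᵥ M *ᵥ x := by
  simpa using hM.dotProduct_mulVec_nonneg x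

lemma PosSemidef.add_add_dotProduct_mulVec_add_add_le (hM : M.PosSemidef) (x y z : ι → ℝ) :
    (x + y + z) ⬝ᵥ M *ᵥ (x + y + z)
      ≤ 3 * (x ⬝ᵥ M *ᵥ x + y ⬝ᵥ M *ᵥ y + z ⬝ᵥ M *ᵥ z) := by
  -- `3 (|x|² + |y|² + |z|²) - |x + y + z|² = |x - y|² + |y - z|² + |x - z|²`
  have hxy := hM.dotProduct_mulVec_self_nonneg (x - y)
  have hyz := hM.dotProduct_mulVec_self_nonneg (y - z)
  have hxz := hM.dotProduct_mulVec_self_nonneg (x - z)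
  rw [hM.isHermitian.sub_dotProduct_mulVec_sub] at hxy hyz hxz
  rw [hM.isHermitian.add_dotProduct_mulVec_add, hM.isHermitian.add_dotProduct_mulVec_add,
    add_dotProduct]
  linarith

variable [DecidableEq ι]

lemma PosDef.dotProduct_le_inv_add (hM : M.PosDef) {η : ℝ} (hη : 0 < η) (x g : ι → ℝ) :
    x ⬝ᵥ g ≤ (2 * η)⁻¹ * (x ⬝ᵥ M⁻¹ *ᵥ x) + η / 2 * (g ⬝ᵥ M *ᵥ g) := by
  have hMg : M⁻¹ *ᵥ (M *ᵥ g) = g := by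
    rw [mulVec_mulVec, nonsing_inv_mul _ ((isUnit_iff_isUnit_det M).mp hM.isUnit), one_mulVec]
  have key := hM.inv.posSemidef.dotProduct_mulVec_self_nonneg (x - η • M *ᵥ g)
  rw [hM.inv.isHermitian.sub_dotProduct_mulVec_sub, smul_dotProduct_mulVec_smul, mulVec_smul,
    hMg, dotProduct_smul, smul_eq_mul, dotProduct_comm (M *ᵥ g)] at key
  have hsplit : (2 * η)⁻¹ * (x ⬝ᵥ M⁻¹ *ᵥ x) + η / 2 * (g ⬝ᵥ M *ᵥ g) - x ⬝ᵥ g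
      = (2 * η)⁻¹ * (x ⬝ᵥ M⁻¹ *ᵥ x - 2 * (η * (x ⬝ᵥ g)) + η ^ 2 * (g ⬝ᵥ M *ᵥ g)) := by
    field_simp
    ring
  rw [← sub_nonneg, hsplit]
  exact mul_nonneg (by positivity) key

end Matrix

lemma eq_zero_of_forall_mul_add_sq_mul_nonneg {a b : ℝ} (h : ∀ s : ℝ, 0 ≤ s * a + s ^ 2 * b) :
    a = 0 := by
  have hmin : IsLocalMin (fun s : ℝ => s * a + s ^ 2 * b) 0 :=
    Filter.Eventually.of_forall fun s => by simpa using h s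
  have hderiv : HasDerivAt (fun s : ℝ => s * a + s ^ 2 * b) a 0 := by
    simpa using
      ((hasDerivAt_id (0 : ℝ)).mul_const a).fun_add ((hasDerivAt_pow 2 (0 : ℝ)).mul_const b)
  exact hmin.hasDerivAt_eq_zero hderiv

namespace StabilizedMirrorAscent

variable {ι : Type*} [Fintype ι]

/-- Negated objective of the stabilized mirror-ascent step: `λ_{t+1}` minimizes
`loss Λ̂⁻¹ η ϱ g_t λ_t`. -/
def loss (M : Matrix ι ι ℝ) (η ϱ : ℝ) (g μ z : ι → ℝ) : ℝ :=
  -(z ⬝ᵥ g) + (2 * η)⁻¹ * ((z - μ) ⬝ᵥ M *ᵥ (z - μ)) + ϱ / 2 * (z ⬝ᵥ M *ᵥ z)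

lemma loss_add_smul {M : Matrix ι ι ℝ} (hM : M.IsHermitian) (η ϱ : ℝ) (g μ w u : ι → ℝ)
    (s : ℝ) :
    loss M η ϱ g μ (w + s • u)
      = loss M η ϱ g μ w
        + s * (-(u ⬝ᵥ g) + η⁻¹ * ((w - μ) ⬝ᵥ M *ᵥ u) + ϱ * (w ⬝ᵥ M *ᵥ u))
        + s ^ 2 * (((2 * η)⁻¹ + ϱ / 2) * (u ⬝ᵥ M *ᵥ u)) := by
  unfold loss
  rw [show w + s • u - μ = (w - μ) + s • u by abel, hM.add_dotProduct_mulVec_add,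
    hM.add_dotProduct_mulVec_add, Matrix.smul_dotProduct_mulVec_smul, Matrix.mulVec_smul,
    dotProduct_smul, dotProduct_smul, add_dotProduct, smul_dotProduct]
  simp only [smul_eq_mul]
  ring

lemma loss_eq_of_forall_le {M : Matrix ι ι ℝ} (hM : M.IsHermitian) {η ϱ : ℝ} {g μ w : ι → ℝ}
    (hmin : ∀ z, loss M η ϱ g μ w ≤ loss M η ϱ g μ z) (z : ι → ℝ) :
    loss M η ϱ g μ z = loss M η ϱ g μ w + ((2 * η)⁻¹ + ϱ / 2) * ((z - w) ⬝ᵥ M *ᵥ (z - w)) := by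
  have hgrad : ∀ u, -(u ⬝ᵥ g) + η⁻¹ * ((w - μ) ⬝ᵥ M *ᵥ u) + ϱ * (w ⬝ᵥ M *ᵥ u) = 0 :=
    fun u => eq_zero_of_forall_mul_add_sq_mul_nonneg
      (b := ((2 * η)⁻¹ + ϱ / 2) * (u ⬝ᵥ M *ᵥ u)) fun s => by
        have := hmin (w + s • u)
        rw [loss_add_smul hM] at this
        linarith
  calc loss M η ϱ g μ z = loss M η ϱ g μ (w + (1 : ℝ) • (z - w)) := by
        rw [one_smul, add_sub_cancel]
    _ = _ := by rw [loss_add_smul hM, hgrad]; ring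

variable [DecidableEq ι] {Λ : Matrix ι ι ℝ} {η ϱ : ℝ}

lemma step_regret_le (hΛ : Λ.PosDef) (hη : 0 < η) (hϱ : 0 ≤ ϱ) {g μ μ' : ι → ℝ}
    (hmin : ∀ z, loss Λ⁻¹ η ϱ g μ μ' ≤ loss Λ⁻¹ η ϱ g μ z) (ν : ι → ℝ) :
    (ν - μ) ⬝ᵥ g
      ≤ (2 * η)⁻¹ * ((ν - μ) ⬝ᵥ Λ⁻¹ *ᵥ (ν - μ) - (ν - μ') ⬝ᵥ Λ⁻¹ *ᵥ (ν - μ'))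
        + ϱ / 2 * (ν ⬝ᵥ Λ⁻¹ *ᵥ ν - μ' ⬝ᵥ Λ⁻¹ *ᵥ μ') + η / 2 * (g ⬝ᵥ Λ *ᵥ g) := by
  have hopt := loss_eq_of_forall_le hΛ.inv.isHermitian hmin ν
  have hyoung := hΛ.dotProduct_le_inv_add hη (μ' - μ) g
  have hgap := mul_nonneg (by positivity : 0 ≤ ϱ / 2)
    (hΛ.inv.posSemidef.dotProduct_mulVec_self_nonneg (ν - μ'))
  unfold loss at hopt
  rw [sub_dotProduct] at hyoung ⊢
  linarith

theorem regret_le (hΛ : Λ.PosDef) (hη : 0 < η) (hϱ : 0 ≤ ϱ) {g lam : ℕ → ι → ℝ}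
    (hlam1 : lam 1 = 0) {T : ℕ} (hT : 1 ≤ T)
    (hmin : ∀ t, 1 ≤ t → ∀ z, loss Λ⁻¹ η ϱ (g t) (lam t) (lam (t + 1))
      ≤ loss Λ⁻¹ η ϱ (g t) (lam t) z)
    {C : ℝ} (hC : ∀ t, g t ⬝ᵥ Λ *ᵥ g t ≤ C) (ν : ι → ℝ) :
    ∑ t ∈ Finset.Icc 1 T, (ν - lam t) ⬝ᵥ g t
      ≤ ((2 * η)⁻¹ + T * (ϱ / 2)) * (ν ⬝ᵥ Λ⁻¹ *ᵥ ν) + T * (η / 2 * C)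
        - ϱ / 2 * ∑ t ∈ Finset.Icc 1 T, lam t ⬝ᵥ Λ⁻¹ *ᵥ lam t := by
  set Q : (ι → ℝ) → ℝ := fun x => x ⬝ᵥ Λ⁻¹ *ᵥ x
  have hQ : ∀ x, 0 ≤ Q x := hΛ.inv.posSemidef.dotProduct_mulVec_self_nonneg
  -- the stabilization term `-‖λ_{t+1}‖²` is shifted to `-‖λ_t‖²`; the error telescopes to
  -- `‖λ_{T+1}‖² - ‖λ_1‖² ≥ 0`
  have hstep : ∀ t ∈ Finset.Icc 1 T, (ν - lam t) ⬝ᵥ g t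
      ≤ -(2 * η)⁻¹ * (Q (ν - lam (t + 1)) - Q (ν - lam t)) + (ϱ / 2 * Q ν + η / 2 * C)
        - ϱ / 2 * Q (lam t) - ϱ / 2 * (Q (lam (t + 1)) - Q (lam t)) := fun t ht => by
    have := step_regret_le hΛ hη hϱ (hmin t (Finset.mem_Icc.mp ht).1) ν
    have := mul_le_mul_of_nonneg_left (hC t) (by positivity : 0 ≤ η / 2)
    linarith
  have hdist : ∑ t ∈ Finset.Icc 1 T, (Q (ν - lam (t + 1)) - Q (ν - lam t))
      = Q (ν - lam (T + 1)) - Q ν := by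
    simpa [hlam1] using Finset.sum_Icc_sub hT (fun t => Q (ν - lam t))
  have hnorm : ∑ t ∈ Finset.Icc 1 T, (Q (lam (t + 1)) - Q (lam t)) = Q (lam (T + 1)) := by
    simpa [hlam1, Q] using Finset.sum_Icc_sub hT (fun t => Q (lam t))
  have hsum := Finset.sum_le_sum hstep
  rw [Finset.sum_sub_distrib, Finset.sum_sub_distrib, Finset.sum_add_distrib, ← Finset.mul_sum,
    ← Finset.mul_sum, ← Finset.mul_sum, hdist, hnorm, Finset.sum_const, Nat.card_Icc,
    nsmul_eq_mul, Nat.add_sub_cancel] at hsum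
  have := mul_nonneg (by positivity : 0 ≤ (2 * η)⁻¹) (hQ (ν - lam (T + 1)))
  have := mul_nonneg (by positivity : 0 ≤ ϱ / 2) (hQ (lam (T + 1)))
  linarith

end StabilizedMirrorAscent

namespace Paper

variable {X A : Type*} {d n : ℕ}

lemma sum_sq_le_of_nrm2_le {u : Fin d → ℝ} {a : ℝ} (h : nrm2 u ≤ a) : ∑ i, u i ^ 2 ≤ a ^ 2 :=
  (Real.sqrt_le_iff.mp h).2

lemma sq_dotp_le {u v : Fin d → ℝ} {a b : ℝ} (hu : nrm2 u ≤ a) (hv : nrm2 v ≤ b) :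
    dotp u v ^ 2 ≤ a ^ 2 * b ^ 2 :=
  (Finset.sum_mul_sq_le_sq_mul_sq _ u v).trans <|
    mul_le_mul (sum_sq_le_of_nrm2_le hu) (sum_sq_le_of_nrm2_le hv)
      (Finset.sum_nonneg fun _ _ => sq_nonneg _) (sq_nonneg a)

lemma sq_vparam_le [Fintype A] {φ : X → A → Fin d → ℝ} {θ : Fin d → ℝ}
    {π : X → A → ℝ} {R Dθ : ℝ} (hπ : IsPolicy π) (hφ : ∀ x a, nrm2 (φ x a) ≤ R)
    (hθ : nrm2 θ ≤ Dθ) (x : X) :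
    vparam φ θ π x ^ 2 ≤ R ^ 2 * Dθ ^ 2 := by
  calc vparam φ θ π x ^ 2 ≤ ∑ a, π x a * dotp θ (φ x a) ^ 2 :=
        (even_two.convexOn_pow (𝕜 := ℝ)).map_sum_le (fun a _ => hπ.1 x a) (hπ.2 x)
          (fun _ _ => Set.mem_univ _)
    _ ≤ ∑ a, π x a * (R ^ 2 * Dθ ^ 2) := Finset.sum_le_sum fun a _ =>
        mul_le_mul_of_nonneg_left ((sq_dotp_le hθ (hφ x a)).trans_eq (mul_comm _ _)) (hπ.1 x a)
    _ = R ^ 2 * Dθ ^ 2 := by rw [← Finset.sum_mul, hπ.2 x, one_mul]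

lemma inv_natCast_mul_sum_le {f : Fin n → ℝ} {K : ℝ} (hK : 0 ≤ K) (hf : ∀ i, f i ≤ K) :
    (n : ℝ)⁻¹ * ∑ i, f i ≤ K := by
  rcases n.eq_zero_or_pos with rfl | hn
  · simpa using hK
  · rw [inv_mul_le_iff₀ (by positivity)]
    simpa using Finset.sum_le_card_nsmul Finset.univ f K fun i _ => hf i

lemma covMat_dotProduct_mulVec (β : ℝ) (φi : Fin n → Fin d → ℝ) (x : Fin d → ℝ) :
    x ⬝ᵥ covMat β φi *ᵥ x = β * (x ⬝ᵥ x) + (n : ℝ)⁻¹ * ∑ i, (φi i ⬝ᵥ x) ^ 2 := by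
  simp only [covMat, add_mulVec, smul_mulVec, one_mulVec, sum_mulVec, vecMulVec_mulVec,
    op_smul_eq_smul, dotProduct_add, dotProduct_smul, dotProduct_sum, smul_eq_mul]
  congr 2
  refine Finset.sum_congr rfl fun i _ => ?_
  rw [dotProduct_comm x (φi i)]
  ring

lemma covMat_posDef {β : ℝ} (hβ : 0 < β) (φi : Fin n → Fin d → ℝ) : (covMat β φi).PosDef :=
  (PosDef.one.smul hβ).add_posSemidef <| PosSemidef.smul (posSemidef_sum _ fun i _ => by
    simpa using posSemidef_vecMulVec_self_star (φi i)) (by positivity)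

lemma covMat_dotProduct_mulVec_le {β a b : ℝ} (hβ : 0 ≤ β) (hb : 0 ≤ b) {φi : Fin n → Fin d → ℝ}
    {x : Fin d → ℝ} (hx : x ⬝ᵥ x ≤ a) (hφx : ∀ i, (φi i ⬝ᵥ x) ^ 2 ≤ b) :
    x ⬝ᵥ covMat β φi *ᵥ x ≤ β * a + b := by
  rw [covMat_dotProduct_mulVec]
  gcongr
  exact inv_natCast_mul_sum_le hb hφx

lemma psiHatApply_dotProduct_covMat_le {β K : ℝ} (hβ : 0 < β) (hK : 0 ≤ K)
    (φi : Fin n → Fin d → ℝ) (xs : Fin n → X) {v : X → ℝ} (hv : ∀ i, v (xs i) ^ 2 ≤ K) :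
    psiHatApply β φi xs v ⬝ᵥ covMat β φi *ᵥ psiHatApply β φi xs v ≤ K := by
  set w := psiHatApply β φi xs v
  set τ := w ⬝ᵥ covMat β φi *ᵥ w
  have hτ : 0 ≤ τ := (covMat_posDef hβ φi).posSemidef.dotProduct_mulVec_self_nonneg w
  have hΛw : covMat β φi *ᵥ w = (n : ℝ)⁻¹ • ∑ i, v (xs i) • φi i := by
    simp only [w, psiHatApply]
    rw [mulVec_mulVec, mul_nonsing_inv _ ((isUnit_iff_isUnit_det _).mp
      (covMat_posDef hβ φi).isUnit), one_mulVec]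
  have hτ_eq : τ = (n : ℝ)⁻¹ * ∑ i, v (xs i) * (φi i ⬝ᵥ w) := by
    simp only [τ, hΛw, dotProduct_comm w, smul_dotProduct, sum_dotProduct, smul_eq_mul]
  have hdata : (n : ℝ)⁻¹ * ∑ i, (φi i ⬝ᵥ w) ^ 2 ≤ τ := by
    have := mul_nonneg hβ.le (dotProduct_self_star_nonneg w)
    simp only [star_trivial] at this
    rw [show τ = _ from covMat_dotProduct_mulVec β φi w]
    linarith
  -- `τ = n⁻¹ ∑ v(xᵢ) ⟨φᵢ, w⟩`, and the data term of `τ` dominates `n⁻¹ ∑ ⟨φᵢ, w⟩²`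
  have hτ_sq : τ ^ 2 ≤ K * τ :=
    calc τ ^ 2 = ((n : ℝ)⁻¹ * (n : ℝ)⁻¹) * (∑ i, v (xs i) * (φi i ⬝ᵥ w)) ^ 2 := by
          rw [hτ_eq]; ring
      _ ≤ ((n : ℝ)⁻¹ * (n : ℝ)⁻¹) * ((∑ i, v (xs i) ^ 2) * ∑ i, (φi i ⬝ᵥ w) ^ 2) := by
          gcongr; exact Finset.sum_mul_sq_le_sq_mul_sq _ _ _
      _ = ((n : ℝ)⁻¹ * ∑ i, v (xs i) ^ 2) * ((n : ℝ)⁻¹ * ∑ i, (φi i ⬝ᵥ w) ^ 2) := by ring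
      _ ≤ K * τ := by
          gcongr
          exact inv_natCast_mul_sum_le hK hv
  nlinarith

lemma gradient_dotProduct_covMat_le {β γ R Dθ : ℝ} (hβ : 0 < β) (hR : 0 ≤ R)
    {φi : Fin n → Fin d → ℝ} (hφi : ∀ i, nrm2 (φi i) ≤ R)
    {omg : Fin d → ℝ} (homg : nrm2 omg ≤ Real.sqrt d) (hrw : ∀ i, dotp (φi i) omg ∈ Set.Icc 0 1)
    {θ : Fin d → ℝ} (hθ : nrm2 θ ≤ Dθ) (xs : Fin n → X) {v : X → ℝ}
    (hv : ∀ i, v (xs i) ^ 2 ≤ R ^ 2 * Dθ ^ 2)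
    {g : Fin d → ℝ} (hg : g = omg + γ • psiHatApply β φi xs v - θ) :
    g ⬝ᵥ covMat β φi *ᵥ g
      ≤ 6 * β * (d + Dθ ^ 2) + 3 * d * (1 + R * Dθ) ^ 2 + 3 * γ ^ 2 * d * R ^ 2 * Dθ ^ 2 := by
  have hDθ : 0 ≤ Dθ := (Real.sqrt_nonneg _).trans hθ
  rcases d.eq_zero_or_pos with rfl | hd
  · simp only [dotProduct, Finset.univ_eq_empty, Finset.sum_empty, CharP.cast_eq_zero]
    positivity
  have hd1 : (1 : ℝ) ≤ d := by exact_mod_cast hd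
  have hω : omg ⬝ᵥ covMat β φi *ᵥ omg ≤ β * d + 1 := by
    refine covMat_dotProduct_mulVec_le hβ.le zero_le_one ?_ fun i => pow_le_one₀ (hrw i).1 (hrw i).2
    simpa [dotProduct, sq, Real.sq_sqrt (Nat.cast_nonneg d)] using sum_sq_le_of_nrm2_le homg
  have hθΛ : θ ⬝ᵥ covMat β φi *ᵥ θ ≤ β * Dθ ^ 2 + R ^ 2 * Dθ ^ 2 := by
    refine covMat_dotProduct_mulVec_le hβ.le (by positivity) ?_ fun i => sq_dotp_le (hφi i) hθ
    simpa [dotProduct, sq] using sum_sq_le_of_nrm2_le hθ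
  have hψ := psiHatApply_dotProduct_covMat_le hβ (by positivity) φi xs hv
  have h3 := (covMat_posDef hβ φi).posSemidef.add_add_dotProduct_mulVec_add_add_le omg
    (γ • psiHatApply β φi xs v) (-θ)
  rw [← sub_eq_add_neg, ← hg, smul_dotProduct_mulVec_smul, mulVec_neg, neg_dotProduct,
    dotProduct_neg, neg_neg] at h3
  calc g ⬝ᵥ covMat β φi *ᵥ g
      ≤ 3 * ((β * d + 1) + γ ^ 2 * (R ^ 2 * Dθ ^ 2) + (β * Dθ ^ 2 + R ^ 2 * Dθ ^ 2)) := by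
        refine h3.trans ?_
        gcongr
    _ ≤ 6 * β * (d + Dθ ^ 2) + 3 * d * (1 + R * Dθ) ^ 2 + 3 * γ ^ 2 * d * R ^ 2 * Dθ ^ 2 := by
        nlinarith [mul_nonneg (sub_nonneg.mpr hd1) (sq_nonneg (1 + R * Dθ)), mul_nonneg hR hDθ,
          mul_nonneg (sub_nonneg.mpr hd1) (sq_nonneg (γ * R * Dθ)),
          mul_nonneg hβ.le (add_nonneg (Nat.cast_nonneg d) (sq_nonneg Dθ))]

theorem statement4_general {X A : Type*} [Fintype X] [Fintype A] {d n : ℕ} (hn : 0 < n)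
    (T : ℕ) (hT : 1 ≤ T)
    (R β γ Dθ η ϱ : ℝ) (hβ : 0 < β) (hη : 0 < η) (hϱ : 0 < ϱ)
    (φ : X → A → Fin d → ℝ) (hφ : ∀ x a, nrm2 (φ x a) ≤ R)
    (omg : Fin d → ℝ) (homg : nrm2 omg ≤ Real.sqrt d)
    (Xi : Fin n → X) (Ai : Fin n → A) (Xs : Fin n → X)
    (hrw : ∀ i, dotp (φ (Xi i) (Ai i)) omg ∈ Set.Icc (0 : ℝ) 1)
    (θ : ℕ → Fin d → ℝ) (hθ : ∀ t, nrm2 (θ t) ≤ Dθ)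
    (π : ℕ → X → A → ℝ) (hπ : ∀ t, IsPolicy (π t))
    (g : ℕ → Fin d → ℝ)
    (hg : ∀ t, g t = omg + γ • psiHatApply β (fun i => φ (Xi i) (Ai i)) Xs
        (vparam φ (θ t) (π t)) - θ t)
    (lam : ℕ → Fin d → ℝ) (hlam1 : lam 1 = 0)
    (hupd : ∀ t, 1 ≤ t → ∀ z : Fin d → ℝ,
      -dotp (lam (t + 1)) (g t)
          + (2 * η)⁻¹ * wnormSq (covMat β (fun i => φ (Xi i) (Ai i)))⁻¹ (lam (t + 1) - lam t)
          + ϱ / 2 * wnormSq (covMat β (fun i => φ (Xi i) (Ai i)))⁻¹ (lam (t + 1))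
        ≤ -dotp z (g t)
          + (2 * η)⁻¹ * wnormSq (covMat β (fun i => φ (Xi i) (Ai i)))⁻¹ (z - lam t)
          + ϱ / 2 * wnormSq (covMat β (fun i => φ (Xi i) (Ai i)))⁻¹ z)
    (lamstar : Fin d → ℝ) :
    (T : ℝ)⁻¹ * ∑ t ∈ Finset.Icc 1 T, dotp (lamstar - lam t) (g t)
      ≤ ((2 * η * T)⁻¹ + ϱ / 2) * wnormSq (covMat β (fun i => φ (Xi i) (Ai i)))⁻¹ lamstar
        + η * (6 * β * (d + Dθ ^ 2) + 3 * d * (1 + R * Dθ) ^ 2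
            + 3 * γ ^ 2 * d * R ^ 2 * Dθ ^ 2) / 2
        - ϱ / (2 * T) * ∑ t ∈ Finset.Icc 1 T,
            wnormSq (covMat β (fun i => φ (Xi i) (Ai i)))⁻¹ (lam t) := by
  have hR : 0 ≤ R := (Real.sqrt_nonneg _).trans (hφ (Xi ⟨0, hn⟩) (Ai ⟨0, hn⟩))
  have hgrad := fun t => gradient_dotProduct_covMat_le hβ hR (fun i => hφ _ _) homg hrw (hθ t)
    Xs (fun i => sq_vparam_le (hπ t) hφ (hθ t) (Xs i)) (hg t)
  have hregret := StabilizedMirrorAscent.regret_le (covMat_posDef hβ _) hη hϱ.le hlam1 hT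
    hupd hgrad lamstar
  have hT0 : (0 : ℝ) < T := by exact_mod_cast hT
  calc (T : ℝ)⁻¹ * ∑ t ∈ Finset.Icc 1 T, dotp (lamstar - lam t) (g t)
      ≤ (T : ℝ)⁻¹ * _ := mul_le_mul_of_nonneg_left hregret (by positivity)
    _ = _ := by
      field_simp
      rfl

/-- regret of the `λ`-player under the stabilized mirror-ascent update:
`(1/T)𝔑_T(λ*) ≤ (1/(2ηT) + ϱ/2)‖λ*‖²_{Λ̂⁻¹} + ηC/2 − (ϱ/(2T))∑ₜ‖λ_t‖²_{Λ̂⁻¹}`. -/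
theorem statement4 {X A : Type*} [Fintype X] [Fintype A] {d n : ℕ} (hn : 0 < n)
    (T : ℕ) (hT : 1 ≤ T)
    (R β γ Dθ η ϱ : ℝ) (hβ : 0 < β) (hγ : γ ∈ Set.Ioo (0 : ℝ) 1) (hη : 0 < η) (hϱ : 0 < ϱ)
    (φ : X → A → Fin d → ℝ) (hφ : ∀ x a, nrm2 (φ x a) ≤ R)
    (omg : Fin d → ℝ) (homg : nrm2 omg ≤ Real.sqrt d)
    (Xi : Fin n → X) (Ai : Fin n → A) (Xs : Fin n → X)
    (hrw : ∀ i, dotp (φ (Xi i) (Ai i)) omg ∈ Set.Icc (0 : ℝ) 1)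
    (θ : ℕ → Fin d → ℝ) (hθ : ∀ t, nrm2 (θ t) ≤ Dθ)
    (π : ℕ → X → A → ℝ) (hπ : ∀ t, IsPolicy (π t))
    (g : ℕ → Fin d → ℝ)
    (hg : ∀ t, g t = omg + γ • psiHatApply β (fun i => φ (Xi i) (Ai i)) Xs
        (vparam φ (θ t) (π t)) - θ t)
    (lam : ℕ → Fin d → ℝ) (hlam1 : lam 1 = 0)
    (hupd : ∀ t, 1 ≤ t → ∀ z : Fin d → ℝ,
      -dotp (lam (t + 1)) (g t)
          + (2 * η)⁻¹ * wnormSq (covMat β (fun i => φ (Xi i) (Ai i)))⁻¹ (lam (t + 1) - lam t)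
          + ϱ / 2 * wnormSq (covMat β (fun i => φ (Xi i) (Ai i)))⁻¹ (lam (t + 1))
        ≤ -dotp z (g t)
          + (2 * η)⁻¹ * wnormSq (covMat β (fun i => φ (Xi i) (Ai i)))⁻¹ (z - lam t)
          + ϱ / 2 * wnormSq (covMat β (fun i => φ (Xi i) (Ai i)))⁻¹ z)
    (lamstar : Fin d → ℝ) :
    (T : ℝ)⁻¹ * ∑ t ∈ Finset.Icc 1 T, dotp (lamstar - lam t) (g t)
      ≤ ((2 * η * T)⁻¹ + ϱ / 2) * wnormSq (covMat β (fun i => φ (Xi i) (Ai i)))⁻¹ lamstar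
        + η * (6 * β * (d + Dθ ^ 2) + 3 * d * (1 + R * Dθ) ^ 2
            + 3 * γ ^ 2 * d * R ^ 2 * Dθ ^ 2) / 2
        - ϱ / (2 * T) * ∑ t ∈ Finset.Icc 1 T,
            wnormSq (covMat β (fun i => φ (Xi i) (Ai i)))⁻¹ (lam t) :=
  statement4_general hn T hT R β γ Dθ η ϱ hβ hη hϱ φ hφ omg homg Xi Ai Xs hrw θ hθ π hπ g hg lam
    hlam1 hupd lamstar

end Paper
end
end

section
/- Let q_1,…,q_T: 𝒳×𝒜 → ℝ satisfy ‖q_t‖_∞ ≤ RD_θ for all t, let π₁ be any initial policy and α > 0, and define π_{t+1}(a|x) = π_t(a|x)exp(α q_t(x,a)) / ∑_{a'} π_t(a'|x)exp(α q_t(x,a')). Then for any comparator policy π* and any state distribution ν*, ∑_{t=1}^T ∑_x ν*(x) ∑_a (π*(a|x) − π_t(a|x)) q_t(x,a) ≤ (∑_x ν*(x) D_KL(π*(·|x) ‖ π₁(·|x)))/α + αTR²D_θ²/2. -/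
noncomputable section
open MeasureTheory Finset Matrix
open scoped BigOperators ENNReal

namespace Paper

variable {X A : Type*}

/-!
Exponential weights is mirror descent with the KL divergence as Bregman divergence. At a fixed
state, the update `π_{t+1} ∝ π_t e^{α q_t}` gives exactly
`KL(π*‖π_t) - KL(π*‖π_{t+1}) = α ⟨π*, q_t⟩ - log ∑_a π_t(a) e^{α q_t(a)}`,
and Hoeffding's lemma bounds the log-partition function by `α ⟨π_t, q_t⟩ + α² (R Dθ)² / 2`.
Averaging over `ν*` and summing over `t`, the KL terms telescope; the last one is nonnegative.
-/

section ExponentialWeights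

open Real

variable {A : Type*} [Fintype A]

def expWeights (p g : A → ℝ) (a : A) : ℝ :=
  p a * exp (g a) / ∑ a', p a' * exp (g a')

lemma sum_mul_exp_pos [Nonempty A] {p : A → ℝ} (hp : ∀ a, 0 < p a) (g : A → ℝ) :
    0 < ∑ a, p a * exp (g a) :=
  Finset.sum_pos (fun a _ => mul_pos (hp a) (exp_pos _)) Finset.univ_nonempty

lemma expWeights_pos [Nonempty A] {p : A → ℝ} (hp : ∀ a, 0 < p a) (g : A → ℝ) (a : A) :
    0 < expWeights p g a :=
  div_pos (mul_pos (hp a) (exp_pos _)) (sum_mul_exp_pos hp g)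

lemma sum_expWeights [Nonempty A] {p : A → ℝ} (hp : ∀ a, 0 < p a) (g : A → ℝ) :
    ∑ a, expWeights p g a = 1 := by
  simp only [expWeights]
  rw [← Finset.sum_div, div_self (sum_mul_exp_pos hp g).ne']

lemma KLdiv_nonneg {p q : A → ℝ} (hp : ∀ a, 0 ≤ p a) (hps : ∑ a, p a = 1)
    (hq : ∀ a, 0 < q a) (hqs : ∑ a, q a = 1) : 0 ≤ KLdiv p q := by
  have hterm : ∀ a ∈ Finset.univ, p a - q a ≤ p a * log (p a / q a) := by
    intro a _
    rcases (hp a).eq_or_lt with h | h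
    · simp [← h, (hq a).le]
    · calc p a - q a = p a * (1 - (p a / q a)⁻¹) := by field_simp
        _ ≤ p a * log (p a / q a) :=
          mul_le_mul_of_nonneg_left (one_sub_inv_le_log_of_pos (div_pos h (hq a))) h.le
  have := Finset.sum_le_sum hterm
  rwa [Finset.sum_sub_distrib, hps, hqs, sub_self] at this

lemma KLdiv_sub_KLdiv_expWeights [Nonempty A] {r p : A → ℝ} (hrs : ∑ a, r a = 1)
    (hp : ∀ a, 0 < p a) (g : A → ℝ) :
    KLdiv r p - KLdiv r (expWeights p g) = ∑ a, r a * g a - log (∑ a, p a * exp (g a)) := by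
  set Z := ∑ a, p a * exp (g a)
  have hZ : 0 < Z := sum_mul_exp_pos hp g
  have hterm : ∀ a, r a * log (r a / p a) - r a * log (r a / expWeights p g a)
      = r a * g a - r a * log Z := by
    intro a
    rcases eq_or_ne (r a) 0 with h | h
    · simp [h]
    · have hw : 0 < p a * exp (g a) := mul_pos (hp a) (exp_pos _)
      rw [expWeights, log_div h (hp a).ne', log_div h (div_pos hw hZ).ne', log_div hw.ne' hZ.ne',
        log_mul (hp a).ne' (exp_ne_zero _), log_exp]
      ring
  rw [KLdiv, KLdiv, ← Finset.sum_sub_distrib, Finset.sum_congr rfl fun a _ => hterm a,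
    Finset.sum_sub_distrib, ← Finset.sum_mul, hrs, one_mul]

lemma log_sum_mul_exp_le {p g : A → ℝ} (hp : ∀ a, 0 ≤ p a) (hps : ∑ a, p a = 1) {m : ℝ}
    (hg : ∀ a, |g a| ≤ m) :
    log (∑ a, p a * exp (g a)) ≤ ∑ a, p a * g a + m ^ 2 / 2 := by
  -- Hoeffding's lemma for the law of `g` under the weights `p`.
  let _ : MeasurableSpace A := ⊤
  let P : PMF A := PMF.ofFintype (fun a => ENNReal.ofReal (p a)) <| by
    rw [← ENNReal.ofReal_sum_of_nonneg fun a _ => hp a, hps, ENNReal.ofReal_one]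
  have hint : ∀ f : A → ℝ, ∫ a, f a ∂P.toMeasure = ∑ a, p a * f a := fun f => by
    simp [P, PMF.integral_eq_sum, PMF.ofFintype_apply, ENNReal.toReal_ofReal (hp _)]
  have hS : 0 < ∑ a, p a * exp (g a) := by
    simpa only [hint] using integral_exp_pos (μ := P.toMeasure) (f := g) .of_finite
  obtain ⟨a₀, -⟩ := Finset.nonempty_of_sum_ne_zero (hps ▸ one_ne_zero : ∑ a, p a ≠ 0)
  have hm : 0 ≤ m := (abs_nonneg _).trans (hg a₀)
  have hoeffding := (ProbabilityTheory.hasSubgaussianMGF_of_mem_Icc (μ := P.toMeasure) (X := g)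
    Measurable.of_discrete.aemeasurable (ae_of_all _ fun a => abs_le.mp (hg a))).mgf_le 1
  have hc : (((‖m - -m‖₊ / 2) ^ 2 : NNReal) : ℝ) = m ^ 2 := by
    rw [NNReal.coe_pow, NNReal.coe_div, coe_nnnorm, NNReal.coe_ofNat, Real.norm_eq_abs,
      sub_neg_eq_add, abs_of_nonneg (by linarith)]
    ring
  simp only [ProbabilityTheory.mgf, hint, hc, one_mul, one_pow, mul_one, exp_sub, mul_div,
    ← Finset.sum_div] at hoeffding
  rw [log_le_iff_le_exp hS, exp_add, mul_comm]
  rwa [div_le_iff₀ (exp_pos _)] at hoeffding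

lemma sum_sub_mul_le_KLdiv_sub_KLdiv_expWeights [Nonempty A] {r p g : A → ℝ}
    (hrs : ∑ a, r a = 1) (hp : ∀ a, 0 < p a) (hps : ∑ a, p a = 1) {η m : ℝ} (hη : 0 < η)
    (hg : ∀ a, |g a| ≤ m) :
    ∑ a, (r a - p a) * g a
      ≤ (KLdiv r p - KLdiv r (expWeights p fun a => η * g a)) / η + η * m ^ 2 / 2 := by
  have hkl := KLdiv_sub_KLdiv_expWeights hrs hp fun a => η * g a
  have hlog := log_sum_mul_exp_le (g := fun a => η * g a) (fun a => (hp a).le) hps (m := η * m)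
    fun a => by
      rw [abs_mul, abs_of_pos hη]
      exact mul_le_mul_of_nonneg_left (hg a) hη.le
  have hsplit : η * ∑ a, (r a - p a) * g a = ∑ a, r a * (η * g a) - ∑ a, p a * (η * g a) := by
    rw [Finset.mul_sum, ← Finset.sum_sub_distrib]
    exact Finset.sum_congr rfl fun a _ => by ring
  rw [← mul_le_mul_iff_of_pos_left hη, mul_add, mul_div_cancel₀ _ hη.ne']
  linarith

lemma expWeights_iterate_isDist [Nonempty A] {p g : ℕ → A → ℝ} (hpos : ∀ a, 0 < p 1 a)
    (hsum : ∑ a, p 1 a = 1) (hnext : ∀ t, 1 ≤ t → p (t + 1) = expWeights (p t) (g t))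
    {t : ℕ} (ht : 1 ≤ t) : (∀ a, 0 < p t a) ∧ ∑ a, p t a = 1 := by
  induction t, ht using Nat.le_induction with
  | base => exact ⟨hpos, hsum⟩
  | succ t ht ih =>
    rw [hnext t ht]
    exact ⟨expWeights_pos ih.1 _, sum_expWeights ih.1 _⟩

end ExponentialWeights

lemma sum_Icc_le_of_le_sub_succ {u D : ℕ → ℝ} {η c : ℝ} {T : ℕ} (hη : 0 < η)
    (hu : ∀ t ∈ Finset.Icc 1 T, u t ≤ (D t - D (t + 1)) / η + c) (hD : 0 ≤ D (T + 1)) :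
    ∑ t ∈ Finset.Icc 1 T, u t ≤ D 1 / η + T * c := by
  have htel : ∑ t ∈ Finset.Icc 1 T, (D t - D (t + 1)) = D 1 - D (T + 1) := by
    rw [← Finset.Ico_add_one_right_eq_Icc, ← neg_sub, ← Finset.sum_Ico_sub D (by omega),
      ← Finset.sum_neg_distrib]
    simp only [neg_sub]
  calc ∑ t ∈ Finset.Icc 1 T, u t ≤ ∑ t ∈ Finset.Icc 1 T, ((D t - D (t + 1)) / η + c) :=
        Finset.sum_le_sum hu
    _ = (D 1 - D (T + 1)) / η + T * c := by
        rw [Finset.sum_add_distrib, ← Finset.sum_div, htel, Finset.sum_const, Nat.card_Icc,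
          nsmul_eq_mul, Nat.add_sub_cancel]
    _ ≤ D 1 / η + T * c := by
        gcongr
        linarith

/-- regret bound for exponential-weights policy updates against any comparator
policy, in terms of the KL divergence to the initial policy. -/
theorem statement14 {X A : Type*} [Fintype X] [Fintype A] [Nonempty A] (T : ℕ)
    (α R Dθ : ℝ) (hα : 0 < α)
    (ν : X → ℝ) (hν : IsDist ν)
    (q : ℕ → X → A → ℝ) (hq : ∀ t x a, |q t x a| ≤ R * Dθ)
    (π : ℕ → X → A → ℝ)
    (hπ1 : IsPolicy (π 1)) (hπ1pos : ∀ x a, 0 < π 1 x a)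
    (hrec : ∀ t, 1 ≤ t → ∀ x a,
      π (t + 1) x a
        = π t x a * Real.exp (α * q t x a) / ∑ a', π t x a' * Real.exp (α * q t x a'))
    (πstar : X → A → ℝ) (hπstar : IsPolicy πstar) :
    ∑ t ∈ Finset.Icc 1 T, ∑ x, ν x * ∑ a, (πstar x a - π t x a) * q t x a
      ≤ (∑ x, ν x * KLdiv (πstar x) (π 1 x)) / α + α * T * R ^ 2 * Dθ ^ 2 / 2 := by
  have hnext : ∀ x t, 1 ≤ t → π (t + 1) x = expWeights (π t x) fun a => α * q t x a :=
    fun x t ht => funext (hrec t ht x)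
  have hdist : ∀ t, 1 ≤ t → ∀ x, (∀ a, 0 < π t x a) ∧ ∑ a, π t x a = 1 :=
    fun t ht x => expWeights_iterate_isDist (p := (π · x)) (hπ1pos x) (hπ1.2 x) (hnext x) ht
  set D : ℕ → ℝ := fun t => ∑ x, ν x * KLdiv (πstar x) (π t x)
  have hstep : ∀ t ∈ Finset.Icc 1 T, ∑ x, ν x * ∑ a, (πstar x a - π t x a) * q t x a
      ≤ (D t - D (t + 1)) / α + α * (R * Dθ) ^ 2 / 2 := by
    intro t htT
    have ht : 1 ≤ t := (Finset.mem_Icc.mp htT).1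
    calc _ ≤ ∑ x, ν x * ((KLdiv (πstar x) (π t x) - KLdiv (πstar x) (π (t + 1) x)) / α
          + α * (R * Dθ) ^ 2 / 2) := by
          refine Finset.sum_le_sum fun x _ => mul_le_mul_of_nonneg_left ?_ (hν.1 x)
          rw [hnext x t ht]
          exact sum_sub_mul_le_KLdiv_sub_KLdiv_expWeights (hπstar.2 x) (hdist t ht x).1
            (hdist t ht x).2 hα (hq t x)
      _ = (D t - D (t + 1)) / α + α * (R * Dθ) ^ 2 / 2 := by
          simp only [D, mul_add, Finset.sum_add_distrib, ← Finset.sum_mul, hν.2, one_mul,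
            mul_div, ← Finset.sum_div, mul_sub, Finset.sum_sub_distrib]
  have hD : 0 ≤ D (T + 1) := Finset.sum_nonneg fun x _ => mul_nonneg (hν.1 x) <|
    KLdiv_nonneg (hπstar.1 x) (hπstar.2 x) (hdist _ (by omega) x).1 (hdist _ (by omega) x).2
  calc _ ≤ D 1 / α + T * (α * (R * Dθ) ^ 2 / 2) := sum_Icc_le_of_le_sub_succ hα hstep hD
    _ = _ := by ring

end Paper
end
end

section
/- Suppose ‖φ(x,a)‖₂ ≤ R for all (x,a) ∈ 𝒳×𝒜. For any θ, θ' ∈ ℝ^d and every state x, the softmax policies satisfy ∑_a |π_θ(a|x) − π_{θ'}(a|x)| ≤ R‖θ − θ'‖₂. -/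
/-!
Along the segment `θ' + t • (θ - θ')` the logits move with velocity `c a = ⟨φ(x,a), θ - θ'⟩`,
and the softmax distribution `p` moves with velocity `p a * (c a - 𝔼_p c)`. The ℓ¹ norm of that
velocity is the mean absolute deviation of `c` under `p`, which by Cauchy–Schwarz is at most the
standard deviation, hence at most `max |c a| ≤ R ‖θ - θ'‖`. The mean value inequality in `ℓ¹`
concludes.
-/

noncomputable section
open MeasureTheory Finset Matrix
open scoped BigOperators ENNReal

namespace Paper

variable {X A : Type*}

open Real

lemma abs_dotp_le {d : ℕ} (u v : Fin d → ℝ) : |dotp u v| ≤ nrm2 u * nrm2 v := by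
  rw [nrm2, nrm2, ← Real.sqrt_mul (by positivity)]
  exact Real.abs_le_sqrt (sum_mul_sq_le_sq_mul_sq _ u v)

lemma sum_mul_abs_sub_mean_le {ι : Type*} [Fintype ι] {p c : ι → ℝ} (hp : ∀ i, 0 ≤ p i)
    (hp1 : ∑ i, p i = 1) {B : ℝ} (hc : ∀ i, |c i| ≤ B) :
    ∑ i, p i * |c i - ∑ j, p j * c j| ≤ B := by
  set m := ∑ j, p j * c j
  obtain ⟨i₀, -, -⟩ := Finset.exists_ne_zero_of_sum_ne_zero (hp1 ▸ one_ne_zero)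
  have hB : 0 ≤ B := (abs_nonneg _).trans (hc i₀)
  have hvar : ∑ i, p i * (c i - m) ^ 2 ≤ B ^ 2 := calc
    ∑ i, p i * (c i - m) ^ 2 = ∑ i, p i * c i ^ 2 - m ^ 2 := by
      have hexp : ∀ i, p i * (c i - m) ^ 2 = p i * c i ^ 2 - 2 * m * (p i * c i) + m ^ 2 * p i :=
        fun i => by ring
      simp only [hexp, sum_add_distrib, sum_sub_distrib, ← mul_sum, hp1]
      ring
    _ ≤ ∑ i, p i * c i ^ 2 := sub_le_self _ (sq_nonneg m)
    _ ≤ ∑ i, p i * B ^ 2 := sum_le_sum fun i _ =>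
      mul_le_mul_of_nonneg_left (sq_le_sq' (abs_le.1 (hc i)).1 (abs_le.1 (hc i)).2) (hp i)
    _ = B ^ 2 := by rw [← sum_mul, hp1, one_mul]
  have hcs : (∑ i, p i * |c i - m|) ^ 2 ≤ (∑ i, p i) * ∑ i, p i * (c i - m) ^ 2 :=
    sum_sq_le_sum_mul_sum_of_sq_le_mul _ (fun i _ => hp i)
      (fun i _ => mul_nonneg (hp i) (sq_nonneg _))
      (fun i _ => le_of_eq (by rw [mul_pow, sq_abs]; ring))
  rw [hp1, one_mul] at hcs
  exact (abs_le_of_sq_le_sq' (hcs.trans hvar) hB).2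

section SoftmaxVec

variable {ι : Type*} [Fintype ι]

def softmaxVec (z : ι → ℝ) (i : ι) : ℝ := exp (z i) / ∑ j, exp (z j)

lemma sum_exp_pos [Nonempty ι] (z : ι → ℝ) : 0 < ∑ j, exp (z j) :=
  sum_pos (fun _ _ => exp_pos _) univ_nonempty

lemma softmaxVec_nonneg (z : ι → ℝ) (i : ι) : 0 ≤ softmaxVec z i := by
  unfold softmaxVec; positivity

lemma sum_softmaxVec [Nonempty ι] (z : ι → ℝ) : ∑ i, softmaxVec z i = 1 := by
  simp only [softmaxVec, ← sum_div, div_self (sum_exp_pos z).ne']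

lemma hasDerivAt_softmaxVec_add_smul [Nonempty ι] (z c : ι → ℝ) (t : ℝ) :
    HasDerivAt (fun s => softmaxVec (z + s • c))
      (fun i => softmaxVec (z + t • c) i * (c i - ∑ j, softmaxVec (z + t • c) j * c j)) t := by
  have hexp : ∀ j, HasDerivAt (fun s => exp ((z + s • c) j)) (exp ((z + t • c) j) * c j) t :=
    fun j => by simpa using ((hasDerivAt_mul_const (c j)).const_add (z j)).exp
  have hsum := HasDerivAt.fun_sum (u := univ) fun j _ => hexp j
  refine hasDerivAt_pi.2 fun i => ?_
  refine ((hexp i).fun_div hsum (sum_exp_pos _).ne').congr_deriv ?_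
  simp only [softmaxVec, div_mul_eq_mul_div, ← sum_div]
  field_simp

theorem sum_abs_softmaxVec_sub_le [Nonempty ι] (z w : ι → ℝ) :
    ∑ i, |softmaxVec z i - softmaxVec w i| ≤ ‖z - w‖ := by
  set c := z - w
  let p : ℝ → ι → ℝ := fun s => softmaxVec (w + s • c)
  let p' : ℝ → ι → ℝ := fun t i => p t i * (c i - ∑ j, p t j * c j)
  have hderiv : ∀ t, HasDerivAt (fun s => WithLp.toLp 1 (p s)) (WithLp.toLp 1 (p' t)) t :=
    fun t => (PiLp.continuousLinearEquiv 1 ℝ _).symm.hasFDerivAt.comp_hasDerivAt t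
      (hasDerivAt_softmaxVec_add_smul w c t)
  have hbound : ∀ t, ‖WithLp.toLp 1 (p' t)‖ ≤ ‖c‖ := by
    intro t
    simp only [p', p, PiLp.norm_eq_of_L1, Real.norm_eq_abs, abs_mul,
      abs_of_nonneg (softmaxVec_nonneg _ _)]
    exact sum_mul_abs_sub_mean_le (softmaxVec_nonneg _) (sum_softmaxVec _)
      fun i => (Real.norm_eq_abs _).symm.trans_le (norm_le_pi_norm c i)
  have hmvt := norm_image_sub_le_of_norm_deriv_le_segment'
    (fun t _ => (hderiv t).hasDerivWithinAt) (fun t _ => hbound t) 1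
    (Set.right_mem_Icc.2 zero_le_one)
  simpa [p, c, PiLp.norm_eq_of_L1] using hmvt

end SoftmaxVec

/-- total-variation smoothness of softmax policies:
`∑ₐ |π_θ(a|x) − π_θ'(a|x)| ≤ R‖θ − θ'‖₂`. -/
theorem statement15 {X A : Type*} [Fintype X] [Fintype A] [Nonempty A] {d : ℕ} (R : ℝ)
    (φ : X → A → Fin d → ℝ) (hφ : ∀ x a, nrm2 (φ x a) ≤ R)
    (θ θ' : Fin d → ℝ) (x : X) :
    ∑ a, |softmax φ θ x a - softmax φ θ' x a| ≤ R * nrm2 (θ - θ') := by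
  have hlogits : ∀ a, ‖dotp (φ x a) θ - dotp (φ x a) θ'‖ ≤ R * nrm2 (θ - θ') := fun a => calc
    ‖dotp (φ x a) θ - dotp (φ x a) θ'‖ = |dotp (φ x a) (θ - θ')| := by
      simp only [dotp, Real.norm_eq_abs, Pi.sub_apply, mul_sub, sum_sub_distrib]
    _ ≤ nrm2 (φ x a) * nrm2 (θ - θ') := abs_dotp_le _ _
    _ ≤ R * nrm2 (θ - θ') := mul_le_mul_of_nonneg_right (hφ x a) (Real.sqrt_nonneg _)
  exact (sum_abs_softmaxVec_sub_le (fun a => dotp (φ x a) θ) (fun a => dotp (φ x a) θ')).trans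
    ((pi_norm_le_iff_of_nonempty _).2 hlogits)

end Paper
end
end
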